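/- arXiv:2506.00372 — 3 statements merged into one kernel-verified Lean document; each statement's English description precedes it below -/
import Mathlib

section
/- Assume the outside option setup (𝒜_N = {a₀}), that a₀ ∈ D for every D ∈ 𝒟, and that 𝒳 has at least |𝒜_A| + 2 elements. Then for every linear order ≻ on 𝒜 and every collection 𝓔 ⊆ 𝒟, the deterministic stochastic choice function ρ^≻_𝓔 is RU-rational. -/
open Finset

noncomputable section

/-- A ranking (strict linear order) on a finite type `T`, encoded as a bijection with
`Fin (Fintype.card T)`; a lower index means a better alternative. -/
abbrev Ranking (T : Type) [Fintype T] : Type := T ≃ Fin (Fintype.card T)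

/-- `x` is strictly preferred to `y` according to the ranking `r`. -/
def Ranking.pref {T : Type} [Fintype T] (r : Ranking T) (x y : T) : Prop :=
  r x < r y

/-- The `r`-best (most preferred) element of a nonempty finite set `D`. -/
def Ranking.best {T : Type} [Fintype T] [DecidableEq T] (r : Ranking T) (D : Finset T)
    (hD : D.Nonempty) : T :=
  r.symm ((D.image fun x => r x).min' (hD.image fun x => r x))

/-- `μ` is a probability distribution on the finite type `T`. -/
def IsDistr {T : Type} [Fintype T] (μ : T → ℝ) : Prop :=
  (∀ t, 0 ≤ μ t) ∧ (∑ t, μ t) = 1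

open Classical in
/-- The probability of the event `P` under the distribution `μ`. -/
def probOf {T : Type} [Fintype T] (μ : T → ℝ) (P : T → Prop) : ℝ :=
  ∑ t, if P t then μ t else 0

/-- `ρ` is a stochastic choice function on the domain `𝒟`: on every menu of the domain it is
nonnegative, sums to one over the menu, and vanishes outside the menu. -/
def IsSCF {A : Type} [Fintype A] [DecidableEq A] (𝒟 : Finset (Finset A))
    (ρ : Finset A → A → ℝ) : Prop :=
  ∀ B ∈ 𝒟, (∀ a ∈ B, 0 ≤ ρ B a) ∧ ((∑ a ∈ B, ρ B a) = 1) ∧ (∀ a ∉ B, ρ B a = 0)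

/-- An aggregation correspondence for the set `AN` of non-atomic aggregates: pairwise disjoint
nonempty sets of underlying alternatives, singletons exactly on atomic aggregates. -/
structure AggCorr (A 𝒳 : Type) [Fintype A] [DecidableEq A] [Fintype 𝒳] [DecidableEq 𝒳]
    (AN : Finset A) where
  X : A → Finset 𝒳
  disj : ∀ a b, a ≠ b → Disjoint (X a) (X b)
  atomic : ∀ a ∉ AN, (X a).card = 1
  nonatomic : ∀ a ∈ AN, 2 ≤ (X a).card

/-- `lam` is a composition distribution for the aggregation correspondence `Xc` on the domain
`𝒟`: for every menu `B ∈ 𝒟` it is a probability distribution over profiles `S` of nonempty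
subsets `S a ⊆ X a`. -/
def IsCompDistr {A 𝒳 : Type} [Fintype A] [DecidableEq A] [Fintype 𝒳] [DecidableEq 𝒳]
    {AN : Finset A} (Xc : AggCorr A 𝒳 AN) (𝒟 : Finset (Finset A))
    (lam : Finset A → (A → Finset 𝒳) → ℝ) : Prop :=
  ∀ B ∈ 𝒟, IsDistr (lam B) ∧
    ∀ S : A → Finset 𝒳, lam B S ≠ 0 → ∀ a, S a ⊆ Xc.X a ∧ (S a).Nonempty

/-- The pair `(μ, lam)` (for the aggregation correspondence `Xc`) rationalizes `ρ` on `𝒟`. -/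
def Rationalizes {A 𝒳 : Type} [Fintype A] [DecidableEq A] [Fintype 𝒳] [DecidableEq 𝒳]
    {AN : Finset A} (Xc : AggCorr A 𝒳 AN) (𝒟 : Finset (Finset A))
    (μ : Ranking 𝒳 → ℝ) (lam : Finset A → (A → Finset 𝒳) → ℝ)
    (ρ : Finset A → A → ℝ) : Prop :=
  IsDistr μ ∧ IsCompDistr Xc 𝒟 lam ∧
    ∀ B ∈ 𝒟, ∀ a ∈ B,
      ρ B a = ∑ S : A → Finset 𝒳, lam B S *
        probOf μ (fun r => ∃ x ∈ S a, ∀ b ∈ B, b ≠ a → ∀ y ∈ S b, Ranking.pref r x y)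

/-- RU-rationality: some pair `(μ, lam)` for some aggregation correspondence with underlying
alternatives `𝒳` and non-atomic aggregates `AN` rationalizes `ρ`. -/
def RURational (𝒳 : Type) [Fintype 𝒳] [DecidableEq 𝒳] {A : Type} [Fintype A] [DecidableEq A]
    (AN : Finset A) (𝒟 : Finset (Finset A)) (ρ : Finset A → A → ℝ) : Prop :=
  ∃ Xc : AggCorr A 𝒳 AN, ∃ μ lam, Rationalizes Xc 𝒟 μ lam ρ

/-- ARU-rationality: `ρ` is a random utility model over the aggregates themselves. -/
def ARURational {A : Type} [Fintype A] [DecidableEq A]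
    (𝒟 : Finset (Finset A)) (ρ : Finset A → A → ℝ) : Prop :=
  ∃ μA : Ranking A → ℝ, IsDistr μA ∧
    ∀ B ∈ 𝒟, ∀ a ∈ B, ρ B a = probOf μA (fun r => ∀ b ∈ B, b ≠ a → Ranking.pref r a b)

/-- Partial RU-rationality: on menus of atomic aggregates only, `ρ` is a random utility model
over linear orders on the atomic aggregates `AA`. -/
def PartialRURational {A : Type} [Fintype A] [DecidableEq A]
    (AA : Finset A) (𝒟 : Finset (Finset A)) (ρ : Finset A → A → ℝ) : Prop :=
  ∃ ν : Ranking {c : A // c ∈ AA} → ℝ, IsDistr ν ∧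
    ∀ B ∈ 𝒟, ∀ (hB : B ⊆ AA), ∀ a, ∀ (ha : a ∈ B),
      ρ B a = probOf ν (fun r =>
        ∀ b : {c : A // c ∈ AA}, (b : A) ∈ B → (b : A) ≠ a → Ranking.pref r ⟨a, hB ha⟩ b)

/-- Limited Monotonicity (outside-option form): adding the outside option `a0` to a menu of
atomic aggregates weakly decreases every atomic choice frequency. -/
def LimitedMono {A : Type} [Fintype A] [DecidableEq A]
    (a0 : A) (AA : Finset A) (𝒟 : Finset (Finset A)) (ρ : Finset A → A → ℝ) : Prop :=
  ∀ D : Finset A, D ⊆ AA → D ∈ 𝒟 → insert a0 D ∈ 𝒟 →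
    ∀ b ∈ D, ρ (insert a0 D) b ≤ ρ D b

/-- Limited Monotonicity (general form): adding any set `E` of non-atomic aggregates to a menu
of atomic aggregates weakly decreases every atomic choice frequency. -/
def LimitedMonoGen {A : Type} [Fintype A] [DecidableEq A]
    (AA AN : Finset A) (𝒟 : Finset (Finset A)) (ρ : Finset A → A → ℝ) : Prop :=
  ∀ D E : Finset A, D ⊆ AA → E ⊆ AN → D ∈ 𝒟 → D ∪ E ∈ 𝒟 →
    ∀ b ∈ D, ρ (D ∪ E) b ≤ ρ D b

/-- The full domain: all nonempty subsets of `A`. -/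
def fullDomain (A : Type) [Fintype A] [DecidableEq A] : Finset (Finset A) :=
  Finset.univ.filter fun D => D.Nonempty

/-- The deterministic "menu-effect" stochastic choice function `ρ^≻_𝓔`: it puts probability 1
on the `r`-maximum of `D` if `a0 ∉ D` or `D ∈ E`, and probability 1 on `a0` otherwise. -/
def vertexSCF {A : Type} [Fintype A] [DecidableEq A]
    (a0 : A) (r : Ranking A) (E : Finset (Finset A)) : Finset A → A → ℝ :=
  fun D a =>
    if h : D.Nonempty then
      if a0 ∉ D ∨ D ∈ E then (if a = Ranking.best r D h then 1 else 0)
      else (if a = a0 then 1 else 0)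
    else 0

open Classical in
/-- The deterministic menu-effect stochastic choice function with multiple non-atomic
aggregates: on a menu `D` belonging to `E b` (for the necessarily unique such `b`, the
collections being pairwise disjoint) it puts probability 1 on `b`; otherwise it puts
probability 1 on the `r`-maximum of `D`. -/
def vertexSCFM {A : Type} [Fintype A] [DecidableEq A]
    (r : Ranking A) (E : A → Finset (Finset A)) : Finset A → A → ℝ :=
  fun D a =>
    if h : D.Nonempty then
      if hex : ∃ b, D ∈ E b then (if a = Classical.choose hex then 1 else 0)
      else (if a = Ranking.best r D h then 1 else 0)
    else 0

/-- Restriction of a choice function to the coordinates `(D, a)` with `D ∈ 𝒟`, viewed as a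
vector in `ℝ^(Finset A × A)`. -/
def restrictTo {A : Type} [Fintype A] [DecidableEq A] (𝒟 : Finset (Finset A))
    (ρ : Finset A → A → ℝ) : Finset A × A → ℝ :=
  fun p => if p.1 ∈ 𝒟 then ρ p.1 p.2 else 0

/-- `RU(n)` (outside-option setup): `ρ` is rationalized by some pair whose aggregation
correspondence satisfies `|X(a0)| = n`. -/
def RUn (𝒳 : Type) [Fintype 𝒳] [DecidableEq 𝒳] {A : Type} [Fintype A] [DecidableEq A]
    (a0 : A) (𝒟 : Finset (Finset A)) (n : ℕ) (ρ : Finset A → A → ℝ) : Prop :=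
  ∃ Xc : AggCorr A 𝒳 ({a0} : Finset A), (Xc.X a0).card = n ∧
    ∃ μ lam, Rationalizes Xc 𝒟 μ lam ρ

/-- `RU((n_a))`: `ρ` is rationalized by some pair whose aggregation correspondence satisfies
`|X(a)| = nv a` for every non-atomic aggregate `a`. -/
def RUvec (𝒳 : Type) [Fintype 𝒳] [DecidableEq 𝒳] {A : Type} [Fintype A] [DecidableEq A]
    (AN : Finset A) (𝒟 : Finset (Finset A)) (nv : A → ℕ) (ρ : Finset A → A → ℝ) : Prop :=
  ∃ Xc : AggCorr A 𝒳 AN, (∀ a ∈ AN, (Xc.X a).card = nv a) ∧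
    ∃ μ lam, Rationalizes Xc 𝒟 μ lam ρ

/-- `μ` is non-overlapping for `Xc`: in every ranking in the support of `μ`, the underlying
alternatives of each non-atomic aggregate occupy adjacent positions. -/
def NonOverlapping {A 𝒳 : Type} [Fintype A] [DecidableEq A] [Fintype 𝒳] [DecidableEq 𝒳]
    {AN : Finset A} (Xc : AggCorr A 𝒳 AN) (μ : Ranking 𝒳 → ℝ) : Prop :=
  ∀ r : Ranking 𝒳, μ r ≠ 0 → ∀ a ∈ AN, ∀ y ∈ Xc.X a, ∀ z ∈ Xc.X a, ∀ x : 𝒳,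
    Ranking.pref r y x → Ranking.pref r x z → x ∈ Xc.X a

/-- `lam` is menu-independent: there is a single (unconditional) probability distribution over
full profiles whose marginal on the coordinates of each menu `B ∈ 𝒟` coincides with `lam B`. -/
def MenuIndependent {A 𝒳 : Type} [Fintype A] [DecidableEq A] [Fintype 𝒳] [DecidableEq 𝒳]
    {AN : Finset A} (Xc : AggCorr A 𝒳 AN) (𝒟 : Finset (Finset A))
    (lam : Finset A → (A → Finset 𝒳) → ℝ) : Prop :=
  ∃ lamBar : (A → Finset 𝒳) → ℝ, IsDistr lamBar ∧
    (∀ S : A → Finset 𝒳, lamBar S ≠ 0 → ∀ a, S a ⊆ Xc.X a ∧ (S a).Nonempty) ∧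
    ∀ B ∈ 𝒟, ∀ S0 : A → Finset 𝒳,
      probOf (lam B) (fun S => ∀ b ∈ B, S b = S0 b)
        = probOf lamBar (fun S => ∀ b ∈ B, S b = S0 b)

/-- Squared Euclidean distance between two stochastic choice functions on the coordinates of
the domain `𝒟`. -/
def distSq {A : Type} [Fintype A] [DecidableEq A] (𝒟 : Finset (Finset A))
    (ρ ρ' : Finset A → A → ℝ) : ℝ :=
  ∑ B ∈ 𝒟, ∑ a ∈ B, (ρ B a - ρ' B a) ^ 2

/-! The outside option gets two alternatives: `x₀`, ranked above everything, and `x a0`, placed at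
the `r`-rank of `a0` among the alternatives `x a` of the atomic aggregates; this takes
`|𝒜| + 1 = |𝒜_A| + 2` alternatives. One fixed ranking of `𝒳` then does all the work, with a
deterministic composition distribution that represents `a0` by `x₀` on the menus outside `E` (where
`a0` must win) and by `x a0` on those in `E` (where the `r`-best aggregate must win). -/

namespace Ranking

variable {T : Type} [Fintype T]

theorem eq_best_iff [DecidableEq T] (r : Ranking T) {D : Finset T} (hD : D.Nonempty) {a : T}
    (ha : a ∈ D) : a = r.best D hD ↔ ∀ b ∈ D, b ≠ a → r.pref a b := by
  rw [best, Equiv.eq_symm_apply, eq_comm, Finset.min'_eq_iff]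
  simp only [Finset.mem_image, forall_exists_index, and_imp, forall_apply_eq_imp_iff₂]
  refine ⟨fun h b hb hba => lt_of_le_of_ne (h.2 b hb) fun e => hba (r.injective e).symm,
    fun h => ⟨⟨a, ha, rfl⟩, fun b hb => ?_⟩⟩
  rcases eq_or_ne b a with rfl | hba
  · exact le_rfl
  · exact (h b hb hba).le

theorem ne_of_pref (r : Ranking T) {x y : T} (h : r.pref x y) : x ≠ y :=
  fun hxy => lt_irrefl (r x) (hxy ▸ h)

theorem pref_asymm (r : Ranking T) {x y : T} (h : r.pref x y) : ¬ r.pref y x :=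
  lt_asymm h

theorem injective_of_pref_iff {A 𝒳 : Type} [Fintype A] [Fintype 𝒳] {r : Ranking A}
    {t : Ranking 𝒳} {x : A → 𝒳} (hx : ∀ a b, t.pref (x a) (x b) ↔ r.pref a b) :
    Function.Injective x := by
  have hnot : ∀ a b, x a = x b → ¬ r.pref a b := fun a b hab h => t.ne_of_pref ((hx a b).mpr h) hab
  exact fun a b hab => r.injective <|
    le_antisymm (not_lt.mp (hnot b a hab.symm)) (not_lt.mp (hnot a b hab))

theorem exists_embedding_with_preferred {A 𝒳 : Type} [Fintype A] [Fintype 𝒳] (r : Ranking A)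
    (h : Fintype.card A < Fintype.card 𝒳) :
    ∃ (t : Ranking 𝒳) (x : A → 𝒳) (x₀ : 𝒳),
      (∀ a b, t.pref (x a) (x b) ↔ r.pref a b) ∧ ∀ a, t.pref x₀ (x a) := by
  let t := Fintype.equivFin 𝒳
  refine ⟨t, fun a => t.symm ⟨r a + 1, by omega⟩, t.symm ⟨0, by omega⟩, fun a b => ?_, fun a => ?_⟩
  all_goals simp only [pref, Equiv.apply_symm_apply, Fin.lt_def]; omega

end Ranking

section PointMass

variable {T : Type} [Fintype T] [DecidableEq T]

theorem isDistr_pi_single (t : T) : IsDistr (Pi.single t (1 : ℝ)) :=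
  ⟨fun s => by by_cases h : s = t <;> simp [h], by simp⟩

open Classical in
theorem probOf_pi_single (t : T) (P : T → Prop) :
    probOf (Pi.single t (1 : ℝ)) P = if P t then 1 else 0 := by
  rw [probOf, Fintype.sum_eq_single t fun s hs => by simp [hs]]
  simp

theorem sum_pi_single_mul (t : T) (f : T → ℝ) :
    ∑ s, (Pi.single t 1 : T → ℝ) s * f s = f t := by
  simp [Pi.single_apply]

end PointMass

section Deterministic

variable {A 𝒳 : Type} [Fintype A] [DecidableEq A] [Fintype 𝒳] [DecidableEq 𝒳] {AN : Finset A}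

open Classical in
theorem rationalizes_pi_single (Xc : AggCorr A 𝒳 AN) {𝒟 : Finset (Finset A)}
    {ρ : Finset A → A → ℝ} (t : Ranking 𝒳) (S : Finset A → A → Finset 𝒳)
    (hS : ∀ B ∈ 𝒟, ∀ a, S B a ⊆ Xc.X a ∧ (S B a).Nonempty)
    (hρ : ∀ B ∈ 𝒟, ∀ a ∈ B,
      ρ B a = if ∃ x ∈ S B a, ∀ b ∈ B, b ≠ a → ∀ y ∈ S B b, t.pref x y then 1 else 0) :
    Rationalizes Xc 𝒟 (Pi.single t 1) (fun B => Pi.single (S B) 1) ρ := by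
  refine ⟨isDistr_pi_single t, fun B hB => ⟨isDistr_pi_single _, fun S' hS' => ?_⟩,
    fun B hB a ha => ?_⟩
  · obtain rfl : S' = S B := by by_contra h; simp [h] at hS'
    exact hS B hB
  · rw [sum_pi_single_mul, probOf_pi_single, hρ B hB a ha]
    -- the two `if`s differ only in their `Decidable` instances
    congr

end Deterministic

section OutsideOption

variable {A 𝒳 : Type} [Fintype A] [DecidableEq A] [Fintype 𝒳] (a0 : A) {x : A → 𝒳} {x₀ : 𝒳}

def outsideOptionRep (E : Finset (Finset A)) (x : A → 𝒳) (x₀ : 𝒳) (B : Finset A) (c : A) : 𝒳 :=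
  if c = a0 ∧ B ∉ E then x₀ else x c

open Classical in
theorem vertexSCF_eq_ite {r : Ranking A} {t : Ranking 𝒳}
    (hx : ∀ a b, t.pref (x a) (x b) ↔ r.pref a b) (hx₀ : ∀ a, t.pref x₀ (x a))
    (E : Finset (Finset A)) {B : Finset A} {a : A} (ha : a ∈ B) :
    vertexSCF a0 r E B a = if ∀ b ∈ B, b ≠ a →
      t.pref (outsideOptionRep a0 E x x₀ B a) (outsideOptionRep a0 E x x₀ B b) then 1 else 0 := by
  have hne : B.Nonempty := ⟨a, ha⟩
  rw [vertexSCF, dif_pos hne]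
  by_cases hB : a0 ∉ B ∨ B ∈ E
  · have hrep : ∀ c ∈ B, outsideOptionRep a0 E x x₀ B c = x c := fun c hc => by
      rw [outsideOptionRep, if_neg]
      rintro ⟨rfl, hBE⟩
      tauto
    have hbest : (∀ b ∈ B, b ≠ a →
        t.pref (outsideOptionRep a0 E x x₀ B a) (outsideOptionRep a0 E x x₀ B b)) ↔
        a = r.best B hne := by
      rw [r.eq_best_iff _ ha]
      exact forall₂_congr fun b hb => by rw [hrep a ha, hrep b hb, hx]
    rw [if_pos hB]
    split_ifs <;> tauto
  · obtain ⟨ha0B, hBE⟩ : a0 ∈ B ∧ B ∉ E := by tauto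
    have hout : (∀ b ∈ B, b ≠ a →
        t.pref (outsideOptionRep a0 E x x₀ B a) (outsideOptionRep a0 E x x₀ B b)) ↔ a = a0 := by
      simp only [outsideOptionRep, hBE, not_false_eq_true, and_true]
      constructor
      · intro h
        by_contra ha0
        have h' := h a0 ha0B (Ne.symm ha0)
        simp only [ha0, if_false, if_true] at h'
        exact t.pref_asymm (hx₀ a) h'
      · rintro rfl b - hb
        simpa [hb] using hx₀ b
    rw [if_neg hB]
    split_ifs <;> tauto

variable [DecidableEq 𝒳]

def outsideOptionCorr (hx : Function.Injective x) (hx₀ : ∀ a, x₀ ≠ x a) :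
    AggCorr A 𝒳 {a0} where
  X a := if a = a0 then {x₀, x a0} else {x a}
  disj a b hab := by
    simp only [Finset.disjoint_left]
    intro y
    split_ifs <;> simp <;> grind [hx.eq_iff]
  atomic a ha := by simp_all
  nonatomic a ha := by simp_all

theorem outsideOptionRep_mem (hx : Function.Injective x) (hx₀ : ∀ a, x₀ ≠ x a)
    (E : Finset (Finset A)) (B : Finset A) (c : A) :
    outsideOptionRep a0 E x x₀ B c ∈ (outsideOptionCorr a0 hx hx₀).X c := by
  unfold outsideOptionRep outsideOptionCorr
  by_cases hc : c = a0 <;> by_cases hB : B ∈ E <;> simp [hc, hB]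

end OutsideOption

theorem stmt4_general {A 𝒳 : Type} [Fintype A] [DecidableEq A] [Fintype 𝒳] [DecidableEq 𝒳]
    (a0 : A) (𝒟 : Finset (Finset A))
    (hX : ({a0}ᶜ : Finset A).card + 2 ≤ Fintype.card 𝒳)
    (r : Ranking A) (E : Finset (Finset A)) :
    RURational 𝒳 ({a0} : Finset A) 𝒟 (vertexSCF a0 r E) := by
  classical
  have hcard : Fintype.card A < Fintype.card 𝒳 := by
    have := Fintype.card_pos_iff.mpr ⟨a0⟩
    rw [Finset.card_compl, Finset.card_singleton] at hX
    omega
  obtain ⟨t, x, x₀, hx, hx₀⟩ := r.exists_embedding_with_preferred hcard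
  have hinj := Ranking.injective_of_pref_iff hx
  have hx₀ne : ∀ a, x₀ ≠ x a := fun a => t.ne_of_pref (hx₀ a)
  refine ⟨outsideOptionCorr a0 hinj hx₀ne, _, _, rationalizes_pi_single _ t
    (fun B a => {outsideOptionRep a0 E x x₀ B a}) (fun B _ a => ?_) (fun B _ a ha => ?_)⟩
  · exact ⟨Finset.singleton_subset_iff.mpr (outsideOptionRep_mem a0 hinj hx₀ne E B a),
      Finset.singleton_nonempty _⟩
  · rw [vertexSCF_eq_ite a0 hx hx₀ E ha]
    exact if_congr (by simp) rfl rfl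

/-- **Remark 3.2**: every deterministic menu-effect choice function `ρ^≻_𝓔` is RU-rational,
provided `𝒳` has at least `|𝒜_A| + 2` elements. -/
theorem stmt4 {A 𝒳 : Type} [Fintype A] [DecidableEq A] [Fintype 𝒳] [DecidableEq 𝒳]
    (a0 : A) (𝒟 : Finset (Finset A)) (ha0 : ∀ D ∈ 𝒟, a0 ∈ D)
    (hX : ({a0}ᶜ : Finset A).card + 2 ≤ Fintype.card 𝒳)
    (r : Ranking A) (E : Finset (Finset A)) (hE : E ⊆ 𝒟) :
    RURational 𝒳 ({a0} : Finset A) 𝒟 (vertexSCF a0 r E) :=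
  stmt4_general a0 𝒟 hX r E
end
end

section
/- Assume 𝒳 has at least |𝒜_A| + 2|𝒜_N| elements (so that an aggregation correspondence exists). A stochastic choice function ρ is rationalized by some pair (μ,λ), for some aggregation correspondence X, with λ menu-independent, if and only if ρ is ARU-rational. -/
open Finset

noncomputable section

/-!
If `λ` is menu-independent with joint law `λ̄`, draw a full profile of compositions `S`
from `λ̄` and, independently, a ranking `≻` of `𝒳` from `μ`. Ranking every aggregate by
the best alternative of its component `S a` yields a random ranking of the aggregates,
and `a` is on top of a menu `B` exactly when `a` is chosen from `B` under `(≻, S)`.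
Since that event only depends on the coordinates of `S` in `B`, whose law is `λ_B`,
the induced random utility reproduces `ρ`.

Conversely, given a random utility `μ_𝒜` over aggregates, the cardinality bound yields
disjoint sets `X(a)` of the required sizes together with representatives `x_a ∈ X(a)`.
Take `λ̄` to be the point mass on the profile `a ↦ {x_a}` and push `μ_𝒜` forward to
rankings of `𝒳` that order the representatives as the aggregates.
-/

open Function

namespace Ranking

variable {T : Type} [Fintype T]

def ofInjective {β : Type} [LinearOrder β] (g : T → β) (hg : Injective g) : Ranking T :=
  (Equiv.ofBijective (fun t => (⟨g t, mem_image_of_mem g (mem_univ t)⟩ : univ.image g))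
    ⟨fun _ _ h => hg (Subtype.ext_iff.1 h), by rintro ⟨_, hb⟩; simpa using hb⟩).trans
    ((univ.image g).orderIsoOfFin (card_image_of_injective _ hg)).symm.toEquiv

theorem pref_ofInjective {β : Type} [LinearOrder β] {g : T → β} (hg : Injective g) {x y : T} :
    (ofInjective g hg).pref x y ↔ g x < g y :=
  OrderIso.lt_iff_lt _

def lexOf {β : Type} [LinearOrder β] (g : T → β) : Ranking T :=
  ofInjective (fun t => toLex (g t, Fintype.equivFin T t))
    fun _ _ h => (Fintype.equivFin T).injective (congrArg Prod.snd (toLex.injective h))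

theorem pref_lexOf {β : Type} [LinearOrder β] {g : T → β} {x y : T} (h : g x = g y → x = y) :
    (lexOf g).pref x y ↔ g x < g y := by
  refine (pref_ofInjective _).trans ?_
  rw [Prod.Lex.toLex_lt_toLex]
  refine or_iff_left fun ⟨hxy, hlt⟩ => ?_
  cases h hxy
  exact lt_irrefl _ hlt

end Ranking

section Distributions

variable {α β : Type} [Fintype α] [Fintype β]

def distrMap [DecidableEq β] (f : α → β) (μ : α → ℝ) (b : β) : ℝ :=
  ∑ a, if f a = b then μ a else 0

theorem IsDistr.map [DecidableEq β] {μ : α → ℝ} (hμ : IsDistr μ) (f : α → β) :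
    IsDistr (distrMap f μ) := by
  refine ⟨fun b => sum_nonneg fun a _ => ite_nonneg (hμ.1 a) le_rfl, ?_⟩
  rw [← hμ.2]
  unfold distrMap
  rw [Finset.sum_comm]
  simp

theorem probOf_distrMap [DecidableEq β] (f : α → β) (μ : α → ℝ) (P : β → Prop) :
    probOf (distrMap f μ) P = probOf μ (fun a => P (f a)) := by
  unfold probOf distrMap
  rw [← Finset.sum_fiberwise univ f]
  refine sum_congr rfl fun b _ => ?_
  rw [Finset.sum_filter]
  by_cases hb : P b <;> simp +contextual [hb]

theorem IsDistr.prod {ν : α → ℝ} {μ : β → ℝ} (hν : IsDistr ν) (hμ : IsDistr μ) :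
    IsDistr (fun q : α × β => ν q.1 * μ q.2) :=
  ⟨fun q => mul_nonneg (hν.1 q.1) (hμ.1 q.2), by
    rw [Fintype.sum_prod_type, ← Finset.sum_mul_sum, hν.2, hμ.2, one_mul]⟩

theorem sum_mul_probOf (ν : α → ℝ) (μ : β → ℝ) (P : α → β → Prop) :
    ∑ a, ν a * probOf μ (P a) =
      probOf (fun q : α × β => ν q.1 * μ q.2) (fun q => P q.1 q.2) := by
  classical
  simp only [probOf, Fintype.sum_prod_type, Finset.mul_sum, mul_ite, mul_zero]

theorem probOf_congr_of_ne_zero {μ : α → ℝ} {P Q : α → Prop}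
    (h : ∀ a, μ a ≠ 0 → (P a ↔ Q a)) :
    probOf μ P = probOf μ Q := by
  classical
  refine sum_congr rfl fun a _ => ?_
  by_cases ha : μ a = 0
  · simp [ha]
  · exact if_congr (h a ha) rfl rfl

theorem isDistr_ite_eq [DecidableEq α] (a₀ : α) :
    IsDistr (fun a => if a = a₀ then (1 : ℝ) else 0) :=
  ⟨fun _ => ite_nonneg zero_le_one le_rfl, by simp⟩

theorem sum_mul_eq_of_probOf_fiber_eq (p : α → β) {ν ν' F : α → ℝ}
    (hν : ∀ s, probOf ν (fun t => p t = p s) = probOf ν' (fun t => p t = p s))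
    (hF : ∀ s t, p s = p t → F s = F t) :
    ∑ s, ν s * F s = ∑ s, ν' s * F s := by
  classical
  rw [← Finset.sum_fiberwise univ p, ← Finset.sum_fiberwise univ p]
  refine sum_congr rfl fun y _ => ?_
  by_cases hy : ∃ s, p s = y
  · obtain ⟨s, rfl⟩ := hy
    have fiber : ∀ ν : α → ℝ,
        ∑ t with p t = p s, ν t * F t = probOf ν (fun t => p t = p s) * F s := by
      intro ν
      rw [probOf, Finset.sum_mul, Finset.sum_filter]
      refine sum_congr rfl fun t _ => ?_
      split_ifs with ht
      · rw [hF t s ht]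
      · rw [zero_mul]
    rw [fiber, fiber, hν]
  · simp [not_exists.1 hy]

theorem sum_mul_eq_of_marginal_eq {ι Y : Type} [Fintype ι] [DecidableEq ι] [Fintype Y]
    (B : Finset ι) {ν ν' F : (ι → Y) → ℝ}
    (hν : ∀ s : ι → Y,
      probOf ν (fun t => ∀ i ∈ B, t i = s i) = probOf ν' (fun t => ∀ i ∈ B, t i = s i))
    (hF : ∀ s t, (∀ i ∈ B, s i = t i) → F s = F t) :
    ∑ s, ν s * F s = ∑ s, ν' s * F s := by
  classical
  have restrict_eq_iff : ∀ s t : ι → Y,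
      B.restrict s = B.restrict t ↔ ∀ i ∈ B, s i = t i := by
    simp [funext_iff]
  exact sum_mul_eq_of_probOf_fiber_eq B.restrict (by simpa only [restrict_eq_iff] using hν)
    fun s t h => hF s t ((restrict_eq_iff s t).1 h)

end Distributions

namespace Ranking

theorem exists_pref_comp_iff {T U : Type} [Fintype T] [Fintype U] {e : T → U} (he : Injective e)
    (r : Ranking T) : ∃ r' : Ranking U, ∀ a b, r'.pref (e a) (e b) ↔ r.pref a b := by
  have key : ∀ c, extend e (fun a => (r a : ℕ)) 0 (e c) = r c := he.extend_apply _ _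
  refine ⟨lexOf (extend e (fun a => (r a : ℕ)) 0), fun a b => ?_⟩
  rw [pref_lexOf, key, key, pref, Fin.lt_def]
  rw [key, key, Fin.val_inj]
  exact fun h => congrArg e (r.injective h)

variable {A Y : Type} [Fintype A] [Fintype Y]

def ofComposition (r : Ranking Y) (S : A → Finset Y) : Ranking A :=
  lexOf fun a => (S a).inf fun x => (r x : WithTop (Fin (Fintype.card Y)))

theorem exists_pref_forall_iff_pref_ofComposition (r : Ranking Y) {S : A → Finset Y}
    (hne : ∀ c, (S c).Nonempty) (hdisj : Pairwise (Disjoint on S)) (a : A) (B : Finset A) :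
    (∃ x ∈ S a, ∀ b ∈ B, b ≠ a → ∀ y ∈ S b, r.pref x y) ↔
      ∀ b ∈ B, b ≠ a → (r.ofComposition S).pref a b := by
  set g : A → WithTop (Fin (Fintype.card Y)) := fun c => (S c).inf fun x => (r x : WithTop _)
  have hg : ∀ c, ∃ x ∈ S c, g c = r x := fun c => exists_mem_eq_inf _ (hne c) _
  have pref_iff : ∀ b, (r.ofComposition S).pref a b ↔ g a < g b := by
    refine fun b => pref_lexOf fun hab => ?_
    obtain ⟨x, hx, hgx⟩ := hg a
    obtain ⟨y, hy, hgy⟩ := hg b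
    have hxy : x = y := r.injective (WithTop.coe_injective (hgx.symm.trans (hab.trans hgy)))
    by_contra hne
    exact disjoint_left.1 (hdisj hne) hx (hxy ▸ hy)
  constructor
  · rintro ⟨x, hx, hx_best⟩ b hb hba
    rw [pref_iff]
    refine (inf_le hx).trans_lt ((Finset.lt_inf_iff (WithTop.coe_lt_top _)).2 fun y hy => ?_)
    exact WithTop.coe_lt_coe.2 (hx_best b hb hba y hy)
  · intro h
    obtain ⟨x, hx, hgx⟩ := hg a
    refine ⟨x, hx, fun b hb hba y hy => WithTop.coe_lt_coe.1 ?_⟩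
    exact hgx ▸ ((pref_iff b).1 (h b hb hba)).trans_le (inf_le hy)

end Ranking

namespace AggCorr

variable {A Y : Type} [Fintype A] [DecidableEq A] [Fintype Y] [DecidableEq Y] {AN : Finset A}

theorem injective_of_forall_mem (Xc : AggCorr A Y AN) {pick : A → Y}
    (h : ∀ a, pick a ∈ Xc.X a) : Injective pick :=
  fun a b hab => by_contra fun hne => disjoint_left.1 (Xc.disj a b hne) (h a) (hab ▸ h b)

theorem exists_of_card_le (hY : ANᶜ.card + 2 * AN.card ≤ Fintype.card Y) :
    ∃ (Xc : AggCorr A Y AN) (pick : A → Y), ∀ a, pick a ∈ Xc.X a := by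
  obtain ⟨f⟩ : Nonempty (A ⊕ AN ↪ Y) := Embedding.nonempty_of_card_le <| by
    have := card_add_card_compl AN
    rw [Fintype.card_sum, Fintype.card_coe]
    omega
  let owner : A ⊕ AN → A := Sum.elim id Subtype.val
  let X : A → Finset Y := fun a => (univ.filter (owner · = a)).map f
  have mem_X : ∀ i, f i ∈ X (owner i) := fun i => mem_map_of_mem f (by simp)
  refine ⟨⟨X, fun a b hab => ?_, fun a ha => ?_, fun a ha => ?_⟩, fun a => f (.inl a),
    fun a => mem_X (.inl a)⟩
  · exact (disjoint_map f).2 (disjoint_filter.2 fun i _ h1 h2 => hab (h1.symm.trans h2))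
  · rw [card_map, card_eq_one]
    refine ⟨.inl a, ?_⟩
    ext (i | ⟨c, hc⟩)
    · simp [owner]
    · simpa [owner] using fun h : c = a => ha (h ▸ hc)
  · rw [card_map]
    refine le_trans ?_ (card_le_card (s := {.inl a, .inr ⟨a, ha⟩}) ?_)
    · rw [card_pair Sum.inl_ne_inr]
    · intro i hi
      rcases mem_insert.1 hi with rfl | hi
      · simp [owner]
      · simp [mem_singleton.1 hi, owner]

end AggCorr

section Rationalization

variable {A Y : Type} [Fintype A] [DecidableEq A] [Fintype Y] [DecidableEq Y] {AN : Finset A}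
  {𝒟 : Finset (Finset A)} {ρ : Finset A → A → ℝ}

theorem Rationalizes.aruRational {Xc : AggCorr A Y AN} {μ : Ranking Y → ℝ}
    {lam : Finset A → (A → Finset Y) → ℝ} (h : Rationalizes Xc 𝒟 μ lam ρ)
    (hlam : MenuIndependent Xc 𝒟 lam) : ARURational 𝒟 ρ := by
  obtain ⟨hμ, -, hρ⟩ := h
  obtain ⟨lamBar, hlamBar, hsupp, hmarg⟩ := hlam
  let joint : (A → Finset Y) × Ranking Y → ℝ := fun q => lamBar q.1 * μ q.2
  refine ⟨distrMap (fun q => q.2.ofComposition q.1) joint, (hlamBar.prod hμ).map _,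
    fun B hB a ha => ?_⟩
  rw [probOf_distrMap, hρ B hB a ha, sum_mul_eq_of_marginal_eq B (hmarg B hB), sum_mul_probOf]
  · refine probOf_congr_of_ne_zero fun q hq => ?_
    have hS := hsupp q.1 (left_ne_zero_of_mul hq)
    exact q.2.exists_pref_forall_iff_pref_ofComposition (fun c => (hS c).2)
      (fun c d hcd => (Xc.disj c d hcd).mono (hS c).1 (hS d).1) a B
  · intro S T hST
    refine congrArg (probOf μ) (funext fun r => propext ?_)
    rw [hST a ha]
    refine exists_congr fun x => and_congr_right fun _ => forall₂_congr fun b hb => ?_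
    rw [hST b hb]

theorem ARURational.exists_rationalizes_menuIndependent
    (hY : ANᶜ.card + 2 * AN.card ≤ Fintype.card Y) (h : ARURational 𝒟 ρ) :
    ∃ Xc : AggCorr A Y AN, ∃ μ lam,
      Rationalizes Xc 𝒟 μ lam ρ ∧ MenuIndependent Xc 𝒟 lam := by
  obtain ⟨μA, hμA, hρ⟩ := h
  obtain ⟨Xc, pick, hpick⟩ := AggCorr.exists_of_card_le hY
  choose ext hext using fun rA : Ranking A =>
    rA.exists_pref_comp_iff (Xc.injective_of_forall_mem hpick)
  let S₀ : A → Finset Y := fun a => {pick a}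
  let δ : (A → Finset Y) → ℝ := fun S => if S = S₀ then 1 else 0
  have hδ : ∀ S, δ S ≠ 0 → ∀ a, S a ⊆ Xc.X a ∧ (S a).Nonempty := by
    intro S hS a
    obtain rfl : S = S₀ := by
      by_contra hne
      simp [δ, hne] at hS
    exact ⟨singleton_subset_iff.2 (hpick a), singleton_nonempty _⟩
  refine ⟨Xc, distrMap ext μA, fun _ => δ,
    ⟨hμA.map ext, fun _ _ => ⟨isDistr_ite_eq S₀, hδ⟩, fun B hB a ha => ?_⟩,
    δ, isDistr_ite_eq S₀, hδ, fun _ _ _ => rfl⟩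
  simpa [δ, S₀, probOf_distrMap, hext] using hρ B hB a ha

end Rationalization

theorem stmt12_general {A 𝒳 : Type} [Fintype A] [DecidableEq A] [Fintype 𝒳] [DecidableEq 𝒳]
    (AN : Finset A) (𝒟 : Finset (Finset A))
    (hX : (ANᶜ : Finset A).card + 2 * AN.card ≤ Fintype.card 𝒳)
    (ρ : Finset A → A → ℝ) :
    (∃ Xc : AggCorr A 𝒳 AN, ∃ μ lam,
        Rationalizes Xc 𝒟 μ lam ρ ∧ MenuIndependent Xc 𝒟 lam) ↔ ARURational 𝒟 ρ :=
  ⟨fun ⟨_, _, _, h, hlam⟩ => h.aruRational hlam,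
    ARURational.exists_rationalizes_menuIndependent hX⟩

/-- **Proposition 4.2**: `ρ` is rationalized by some pair `(μ, λ)` with `λ` menu-independent
iff `ρ` is ARU-rational. -/
theorem stmt12 {A 𝒳 : Type} [Fintype A] [DecidableEq A] [Fintype 𝒳] [DecidableEq 𝒳]
    (AN : Finset A) (𝒟 : Finset (Finset A)) (h𝒟 : ∀ B ∈ 𝒟, B.Nonempty)
    (hX : (ANᶜ : Finset A).card + 2 * AN.card ≤ Fintype.card 𝒳)
    (ρ : Finset A → A → ℝ) (hρ : IsSCF 𝒟 ρ) :
    (∃ Xc : AggCorr A 𝒳 AN, ∃ μ lam,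
        Rationalizes Xc 𝒟 μ lam ρ ∧ MenuIndependent Xc 𝒟 lam) ↔ ARURational 𝒟 ρ :=
  stmt12_general AN 𝒟 hX ρ
end
end

section
/- Fix an aggregation correspondence X. If a pair (μ,λ) rationalizes a stochastic choice function ρ and μ is non-overlapping, then for every composition distribution λ' (for the same aggregation correspondence X), the pair (μ,λ') also rationalizes ρ. -/
open Finset

noncomputable section

/-!
Under a ranking in which the alternatives of every aggregate occupy adjacent positions, the
aggregates themselves are linearly ordered as blocks: if one alternative of `a` beats one
alternative of `b`, then all of `X a` beats all of `X b`. Hence whether some sampled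
alternative of `a` beats every sampled alternative of the rest of the menu does not depend on
the nonempty samples `S c ⊆ X c`, and the choice probability is the same under every
composition distribution.
-/

theorem probOf_congr_of_support {T : Type} [Fintype T] {μ : T → ℝ} {P Q : T → Prop}
    (hPQ : ∀ t, μ t ≠ 0 → (P t ↔ Q t)) : probOf μ P = probOf μ Q := by
  classical
  unfold probOf
  refine Finset.sum_congr rfl fun t _ => ?_
  by_cases ht : μ t = 0
  · simp [ht]
  · simp only [hPQ t ht]

theorem IsDistr.sum_mul_eq_of_support {T : Type} [Fintype T] {p f : T → ℝ} {c : ℝ}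
    (hp : IsDistr p) (hf : ∀ t, p t ≠ 0 → f t = c) : ∑ t, p t * f t = c := by
  calc ∑ t, p t * f t = ∑ t, p t * c :=
        Finset.sum_congr rfl fun t _ => by
          by_cases ht : p t = 0
          · simp [ht]
          · rw [hf t ht]
    _ = c := by rw [← Finset.sum_mul, hp.2, one_mul]

theorem Ranking.pref_or_pref_of_ne {T : Type} [Fintype T] (r : Ranking T) {x y : T}
    (hxy : x ≠ y) : r.pref x y ∨ r.pref y x :=
  lt_or_gt_of_ne (r.injective.ne hxy)

namespace AggCorr

variable {A 𝒳 : Type} [Fintype A] [DecidableEq A] [Fintype 𝒳] [DecidableEq 𝒳]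
  {AN : Finset A} (Xc : AggCorr A 𝒳 AN)

/-- `NonOverlapping Xc μ` unfolds to: every ranking in the support of `μ` is `Contiguous`. -/
def Contiguous (r : Ranking 𝒳) : Prop :=
  ∀ a ∈ AN, ∀ y ∈ Xc.X a, ∀ z ∈ Xc.X a, ∀ x : 𝒳, r.pref y x → r.pref x z → x ∈ Xc.X a

variable {Xc} {r : Ranking 𝒳}

theorem Contiguous.mem_of_pref_of_pref (hr : Xc.Contiguous r) {a : A} {x y z : 𝒳}
    (hy : y ∈ Xc.X a) (hz : z ∈ Xc.X a) (hyx : r.pref y x) (hxz : r.pref x z) :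
    x ∈ Xc.X a := by
  by_cases ha : a ∈ AN
  · exact hr a ha y hy z hz x hyx hxz
  · obtain ⟨v, hv⟩ := Finset.card_eq_one.mp (Xc.atomic a ha)
    rw [hv, Finset.mem_singleton] at hy hz
    subst hy hz
    exact absurd hxz (lt_asymm hyx)

theorem Contiguous.pref_of_pref (hr : Xc.Contiguous r) {a b : A} (hab : a ≠ b)
    {x y x' y' : 𝒳} (hx : x ∈ Xc.X a) (hy : y ∈ Xc.X b) (hxy : r.pref x y)
    (hx' : x' ∈ Xc.X a) (hy' : y' ∈ Xc.X b) : r.pref x' y' := by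
  have hdisj := Finset.disjoint_left.mp (Xc.disj a b hab)
  have hne : ∀ {u v}, u ∈ Xc.X a → v ∈ Xc.X b → u ≠ v := fun hu hv huv =>
    hdisj hu (huv ▸ hv)
  refine (r.pref_or_pref_of_ne (hne hx' hy')).resolve_right fun hy'x' => ?_
  rcases r.pref_or_pref_of_ne (hne hx hy').symm with hy'x | hxy'
  · exact hdisj hx (hr.mem_of_pref_of_pref hy' hy hy'x hxy)
  · exact hdisj (hr.mem_of_pref_of_pref hx hx' hxy' hy'x') hy'

theorem Contiguous.exists_pref_iff (hr : Xc.Contiguous r) {B : Finset A} {a : A}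
    {S : A → Finset 𝒳} (hS : ∀ c, S c ⊆ Xc.X c ∧ (S c).Nonempty) :
    (∃ x ∈ S a, ∀ b ∈ B, b ≠ a → ∀ y ∈ S b, r.pref x y) ↔
      ∀ b ∈ B, b ≠ a → ∀ x ∈ Xc.X a, ∀ y ∈ Xc.X b, r.pref x y := by
  constructor
  · rintro ⟨x, hxS, hx⟩ b hb hba x' hx' y' hy'
    obtain ⟨y, hyS⟩ := (hS b).2
    exact hr.pref_of_pref hba.symm ((hS a).1 hxS) ((hS b).1 hyS) (hx b hb hba y hyS) hx' hy'
  · intro hall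
    obtain ⟨x, hxS⟩ := (hS a).2
    exact ⟨x, hxS, fun b hb hba y hyS => hall b hb hba x ((hS a).1 hxS) y ((hS b).1 hyS)⟩

end AggCorr

theorem stmt13_general {A 𝒳 : Type} [Fintype A] [DecidableEq A] [Fintype 𝒳] [DecidableEq 𝒳]
    {AN : Finset A} (Xc : AggCorr A 𝒳 AN)
    (𝒟 : Finset (Finset A))
    (μ : Ranking 𝒳 → ℝ) (lam lam' : Finset A → (A → Finset 𝒳) → ℝ)
    (ρ : Finset A → A → ℝ)
    (h : Rationalizes Xc 𝒟 μ lam ρ) (hno : NonOverlapping Xc μ)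
    (hlam' : IsCompDistr Xc 𝒟 lam') :
    Rationalizes Xc 𝒟 μ lam' ρ := by
  obtain ⟨hμ, hlam, hρ⟩ := h
  refine ⟨hμ, hlam', fun B hB a ha => ?_⟩
  have hchoice : ∀ κ, IsCompDistr Xc 𝒟 κ →
      ∑ S : A → Finset 𝒳, κ B S *
          probOf μ (fun r => ∃ x ∈ S a, ∀ b ∈ B, b ≠ a → ∀ y ∈ S b, r.pref x y) =
        probOf μ (fun r => ∀ b ∈ B, b ≠ a → ∀ x ∈ Xc.X a, ∀ y ∈ Xc.X b, r.pref x y) :=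
    fun κ hκ => (hκ B hB).1.sum_mul_eq_of_support fun S hS =>
      probOf_congr_of_support fun r hr =>
        AggCorr.Contiguous.exists_pref_iff (hno r hr) ((hκ B hB).2 S hS)
  rw [hρ B hB a ha, hchoice lam hlam, hchoice lam' hlam']

/-- **Lemma A.1(a)**: if `(μ, λ)` rationalizes `ρ` and `μ` is non-overlapping, then `(μ, λ')`
rationalizes `ρ` for every composition distribution `λ'` (for the same aggregation
correspondence). -/
theorem stmt13 {A 𝒳 : Type} [Fintype A] [DecidableEq A] [Fintype 𝒳] [DecidableEq 𝒳]
    {AN : Finset A} (Xc : AggCorr A 𝒳 AN)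
    (𝒟 : Finset (Finset A)) (h𝒟 : ∀ B ∈ 𝒟, B.Nonempty)
    (μ : Ranking 𝒳 → ℝ) (lam lam' : Finset A → (A → Finset 𝒳) → ℝ)
    (ρ : Finset A → A → ℝ)
    (h : Rationalizes Xc 𝒟 μ lam ρ) (hno : NonOverlapping Xc μ)
    (hlam' : IsCompDistr Xc 𝒟 lam') :
    Rationalizes Xc 𝒟 μ lam' ρ :=
  stmt13_general Xc 𝒟 μ lam lam' ρ h hno hlam'
end
end
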